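/- Let ψ₀, ψ₁ ∈ ℂ^M be orthonormal, let Φ = (e₀ ⊗ ψ₀ + e₁ ⊗ ψ₁)/√2 ∈ ℂ² ⊗ ℂ^M where e₀, e₁ is the standard basis of ℂ², and let v be a 2×2 unitary matrix with entries v_{ij}. Let SWAP : ℂ^M ⊗ ℂ^M → ℂ^M ⊗ ℂ^M be the linear map with x ⊗ y ↦ y ⊗ x. Then for every ψ ∈ ℂ^M, writing λ₀ = ⟨ψ₀, ψ⟩ and λ₁ = ⟨ψ₁, ψ⟩, the vector (⟨Φ| ⊗ I_M) · (vᵀ ⊗ I_M ⊗ I_M) · (I_{ℂ²} ⊗ SWAP) · (Φ ⊗ ψ) ∈ ℂ^M equals (1/2)·[(v₀₀λ₀ + v₀₁λ₁)ψ₀ + (v₁₀λ₀ + v₁₁λ₁)ψ₁], where the three tensor factors are ordered as ℂ² ⊗ ℂ^M ⊗ ℂ^M, vᵀ acts on the first factor, SWAP on the last two factors, and ⟨Φ| ⊗ I_M maps ℂ² ⊗ ℂ^M ⊗ ℂ^M to the last ℂ^M factor by pairing the first two factors with Φ. -/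

import Mathlib

/-!
After the swap and `vᵀ`, the state is `Σ_a e_a ⊗ ψ ⊗ χ_a` with `χ_a = Σ_b v_{ba} ψ_b / √2`.
Pairing the first two factors with `Φ` sends `e_a ⊗ ψ` to `λ_a / √2`, so the output is
`Σ_a λ_a χ_a / √2 = ½ Σ_b (Σ_a v_{ba} λ_a) ψ_b`.
-/

open Matrix
open scoped Kronecker

/-- The state `Φ = (e₀ ⊗ ψ₀ + e₁ ⊗ ψ₁)/√2 ∈ ℂ² ⊗ ℂ^M`. -/
noncomputable def PhiVec (M : ℕ) (ψ₀ ψ₁ : Fin M → ℂ) : Fin 2 × Fin M → ℂ :=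
  fun p => (if p.1 = 0 then ψ₀ p.2 else ψ₁ p.2) / (Real.sqrt 2 : ℂ)

/-- The SWAP operator on `ℂ^M ⊗ ℂ^M`, `x ⊗ y ↦ y ⊗ x`. -/
def SWAPmat (M : ℕ) : Matrix (Fin M × Fin M) (Fin M × Fin M) ℂ :=
  Matrix.of fun p q => if p.1 = q.2 ∧ p.2 = q.1 then 1 else 0

/-- The partial bra `⟨Φ| ⊗ I : ℂ² ⊗ ℂ^M ⊗ ℂ^M → ℂ^M`, pairing the first two tensor
factors with `Φ`. -/
noncomputable def braPhi (M : ℕ) (ψ₀ ψ₁ : Fin M → ℂ) :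
    Matrix (Fin M) (Fin 2 × Fin M × Fin M) ℂ :=
  Matrix.of fun m' p =>
    (starRingEnd ℂ) (PhiVec M ψ₀ ψ₁ (p.1, p.2.1)) * (if p.2.2 = m' then 1 else 0)

namespace Matrix

variable {R l m n : Type*} [Semiring R]

theorem kronecker_one_mulVec_apply [Fintype m] [Fintype n] [DecidableEq n] (A : Matrix l m R)
    (f : m × n → R) (a : l) (p : n) :
    ((A ⊗ₖ (1 : Matrix n n R)) *ᵥ f) (a, p) = (A *ᵥ fun b => f (b, p)) a := by
  simp [mulVec, dotProduct, Fintype.sum_prod_type, one_apply]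

theorem one_kronecker_mulVec_apply [Fintype l] [Fintype m] [DecidableEq l] (B : Matrix n m R)
    (f : l × m → R) (a : l) (p : n) :
    (((1 : Matrix l l R) ⊗ₖ B) *ᵥ f) (a, p) = (B *ᵥ fun q => f (a, q)) p := by
  simp [mulVec, dotProduct, Fintype.sum_prod_type, one_apply]

end Matrix

variable {M : ℕ}

theorem SWAPmat_mulVec_apply (g : Fin M × Fin M → ℂ) (m n : Fin M) :
    (SWAPmat M *ᵥ g) (m, n) = g (n, m) := by
  simp [SWAPmat, mulVec, dotProduct, Fintype.sum_prod_type, ite_and]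

theorem PhiVec_apply (ψ₀ ψ₁ : Fin M → ℂ) (a : Fin 2) (m : Fin M) :
    PhiVec M ψ₀ ψ₁ (a, m) = ![ψ₀, ψ₁] a m / (Real.sqrt 2 : ℂ) := by
  fin_cases a <;> rfl

theorem braPhi_mulVec_apply (ψ₀ ψ₁ : Fin M → ℂ) (g : Fin 2 × Fin M × Fin M → ℂ) (n : Fin M) :
    (braPhi M ψ₀ ψ₁ *ᵥ g) n = ∑ a, ∑ m, star (PhiVec M ψ₀ ψ₁ (a, m)) * g (a, m, n) := by
  simp [braPhi, mulVec, dotProduct, Fintype.sum_prod_type]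

theorem braPhi_mulVec_of_product (ψ₀ ψ₁ ψ : Fin M → ℂ) (χ : Fin 2 → Fin M → ℂ) :
    braPhi M ψ₀ ψ₁ *ᵥ (fun p => ψ p.2.1 * χ p.1 p.2.2)
      = ∑ a, ((star (![ψ₀, ψ₁] a) ⬝ᵥ ψ) / (Real.sqrt 2 : ℂ)) • χ a := by
  funext n
  simp only [braPhi_mulVec_apply, PhiVec_apply, Finset.sum_apply, Pi.smul_apply, smul_eq_mul,
    dotProduct, Finset.sum_div, Finset.sum_mul, star_div₀, Pi.star_apply]
  simp [Complex.conj_ofReal, mul_comm, mul_left_comm, div_eq_mul_inv, mul_assoc]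

theorem transpose_kronecker_one_mulVec_swap_PhiVec (v : Matrix (Fin 2) (Fin 2) ℂ)
    (ψ₀ ψ₁ ψ : Fin M → ℂ) :
    (vᵀ ⊗ₖ (1 : Matrix (Fin M × Fin M) (Fin M × Fin M) ℂ)) *ᵥ
        (((1 : Matrix (Fin 2) (Fin 2) ℂ) ⊗ₖ SWAPmat M) *ᵥ
          fun p : Fin 2 × Fin M × Fin M => PhiVec M ψ₀ ψ₁ (p.1, p.2.1) * ψ p.2.2)
      = fun p => ψ p.2.1 * (∑ b, (v b p.1 / (Real.sqrt 2 : ℂ)) • ![ψ₀, ψ₁] b) p.2.2 := by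
  funext ⟨a, m, n⟩
  simp only [kronecker_one_mulVec_apply, one_kronecker_mulVec_apply, SWAPmat_mulVec_apply,
    mulVec_transpose, vecMul, dotProduct, PhiVec_apply, Finset.sum_apply, Pi.smul_apply,
    smul_eq_mul, Finset.mul_sum]
  exact Finset.sum_congr rfl fun b _ => by ring

theorem probabilistic_protocol_correct_general
    (M : ℕ) (ψ₀ ψ₁ : Fin M → ℂ)
    (v : Matrix (Fin 2) (Fin 2) ℂ) :
    ∀ ψ : Fin M → ℂ,
      braPhi M ψ₀ ψ₁ *ᵥ
        ((vᵀ ⊗ₖ (1 : Matrix (Fin M × Fin M) (Fin M × Fin M) ℂ)) *ᵥ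
          (((1 : Matrix (Fin 2) (Fin 2) ℂ) ⊗ₖ SWAPmat M) *ᵥ
            fun p : Fin 2 × Fin M × Fin M =>
              PhiVec M ψ₀ ψ₁ (p.1, p.2.1) * ψ p.2.2))
      = (1 / 2 : ℂ) •
          ((v 0 0 * (star ψ₀ ⬝ᵥ ψ) + v 0 1 * (star ψ₁ ⬝ᵥ ψ)) • ψ₀
            + (v 1 0 * (star ψ₀ ⬝ᵥ ψ) + v 1 1 * (star ψ₁ ⬝ᵥ ψ)) • ψ₁) := by
  intro ψ
  have hsqrt : (Real.sqrt 2 : ℂ) ^ 2 = 2 := by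
    rw [← Complex.ofReal_pow, Real.sq_sqrt zero_le_two, Complex.ofReal_ofNat]
  -- `χ` is given explicitly: `rw` cannot solve the higher-order pattern `χ p.1 p.2.2`.
  rw [transpose_kronecker_one_mulVec_swap_PhiVec,
    braPhi_mulVec_of_product _ _ _ fun a => ∑ b, (v b a / (Real.sqrt 2 : ℂ)) • ![ψ₀, ψ₁] b]
  funext n
  simp only [Fin.sum_univ_two, Matrix.cons_val_zero, Matrix.cons_val_one, Pi.add_apply,
    Pi.smul_apply, smul_eq_mul]
  field_simp
  rw [hsqrt]
  ring

/-- **Correctness of the probabilistic interior protocol.** Applying `I ⊗ SWAP`, then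
`vᵀ ⊗ I ⊗ I`, to `Φ ⊗ ψ` and projecting the first two factors onto `Φ` yields
`½[(v₀₀λ₀ + v₀₁λ₁)ψ₀ + (v₁₀λ₀ + v₁₁λ₁)ψ₁]`, where `λ_i = ⟨ψ_i, ψ⟩`. -/
theorem probabilistic_protocol_correct
    (M : ℕ) (ψ₀ ψ₁ : Fin M → ℂ)
    (h00 : star ψ₀ ⬝ᵥ ψ₀ = 1) (h11 : star ψ₁ ⬝ᵥ ψ₁ = 1) (h01 : star ψ₀ ⬝ᵥ ψ₁ = 0)
    (v : Matrix (Fin 2) (Fin 2) ℂ) (hv : vᴴ * v = 1) :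
    ∀ ψ : Fin M → ℂ,
      braPhi M ψ₀ ψ₁ *ᵥ
        ((vᵀ ⊗ₖ (1 : Matrix (Fin M × Fin M) (Fin M × Fin M) ℂ)) *ᵥ
          (((1 : Matrix (Fin 2) (Fin 2) ℂ) ⊗ₖ SWAPmat M) *ᵥ
            fun p : Fin 2 × Fin M × Fin M =>
              PhiVec M ψ₀ ψ₁ (p.1, p.2.1) * ψ p.2.2))
      = (1 / 2 : ℂ) •
          ((v 0 0 * (star ψ₀ ⬝ᵥ ψ) + v 0 1 * (star ψ₁ ⬝ᵥ ψ)) • ψ₀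
            + (v 1 0 * (star ψ₀ ⬝ᵥ ψ) + v 1 1 * (star ψ₁ ⬝ᵥ ψ)) • ψ₁) :=
  probabilistic_protocol_correct_general M ψ₀ ψ₁ v
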